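/- Let a, b ∈ ℝ with b > 0, let θ ∈ ℂ with 0 < |θ| < 1, set λ = a − b(θ + θ⁻¹), and suppose 𝔟(k) → b as k → ∞. Let x : ℕ → ℂ be a solution of the Jacobi difference equation with coefficients (𝔞, 𝔟) and spectral parameter λ such that x(k)·θ^{−k} → 1 as k → ∞. Then the series ∑_{k=1}^{∞} |x(k)|² converges and 𝔟(0)·{x, x̄}(0) = b·(θ̄ − θ)·(|θ|^{−2} − 1)·∑_{k=1}^{∞} |x(k)|², where {x,y}(k) = x(k)y(k+1) − x(k+1)y(k) and x̄ is the complex conjugate sequence. -/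

import Mathlib

open Complex Filter

/-- The Jacobi difference equation: for all `k ≥ 1`,
`-𝔟(k-1)·x(k-1) + 𝔞(k)·x(k) - 𝔟(k)·x(k+1) = λ·x(k)` (here written with `k+1` in place of `k`). -/
def IsJacobiSolution (𝔞 𝔟 : ℕ → ℝ) (lam : ℂ) (x : ℕ → ℂ) : Prop :=
  ∀ k : ℕ, -(𝔟 k : ℂ) * x k + (𝔞 (k + 1) : ℂ) * x (k + 1) - (𝔟 (k + 1) : ℂ) * x (k + 2)
    = lam * x (k + 1)

/-- Discrete Wronskian `{x,y}(k) = x(k)y(k+1) − x(k+1)y(k)`. -/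
def discrWronskian (x y : ℕ → ℂ) (k : ℕ) : ℂ := x k * y (k + 1) - x (k + 1) * y k

/-!
Since the coefficients are real, `x̄` solves the Jacobi equation with parameter `λ̄`, and
Green's identity `𝔟(k+1){x,x̄}(k+1) - 𝔟(k){x,x̄}(k) = (λ - λ̄)|x(k+1)|²` telescopes. The Jost
asymptotics give `x(k) = O(θ^k)`, so `∑ |x(k)|²` converges and `𝔟(k){x,x̄}(k) → 0`; hence
`𝔟(0){x,x̄}(0) = (λ̄ - λ) ∑_{k ≥ 1} |x(k)|²`, and `λ̄ - λ = b(θ̄ - θ)(|θ|⁻² - 1)`.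
-/

open Asymptotics Topology

namespace IsJacobiSolution

variable {𝔞 𝔟 : ℕ → ℝ} {lam mu : ℂ} {x y : ℕ → ℂ}

theorem conj (hx : IsJacobiSolution 𝔞 𝔟 lam x) :
    IsJacobiSolution 𝔞 𝔟 (starRingEnd ℂ lam) (fun k => starRingEnd ℂ (x k)) := by
  intro k
  simpa only [map_add, map_sub, map_mul, map_neg, conj_ofReal] using
    congrArg (starRingEnd ℂ) (hx k)

theorem mul_discrWronskian_succ (hx : IsJacobiSolution 𝔞 𝔟 lam x)
    (hy : IsJacobiSolution 𝔞 𝔟 mu y) (k : ℕ) :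
    (𝔟 (k + 1) : ℂ) * discrWronskian x y (k + 1)
      = 𝔟 k * discrWronskian x y k + (lam - mu) * (x (k + 1) * y (k + 1)) := by
  unfold discrWronskian
  linear_combination y (k + 1) * hx k - x (k + 1) * hy k

theorem mul_discrWronskian_eq_add_sum (hx : IsJacobiSolution 𝔞 𝔟 lam x)
    (hy : IsJacobiSolution 𝔞 𝔟 mu y) (n : ℕ) :
    (𝔟 n : ℂ) * discrWronskian x y n
      = 𝔟 0 * discrWronskian x y 0
        + (lam - mu) * ∑ k ∈ Finset.range n, x (k + 1) * y (k + 1) := by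
  induction n with
  | zero => simp
  | succ n ih => rw [mul_discrWronskian_succ hx hy, ih, Finset.sum_range_succ]; ring

theorem mul_discrWronskian_zero_eq_tsum (hx : IsJacobiSolution 𝔞 𝔟 lam x)
    (hy : IsJacobiSolution 𝔞 𝔟 mu y) (hs : Summable fun k => x (k + 1) * y (k + 1))
    (hW : Tendsto (fun k => (𝔟 k : ℂ) * discrWronskian x y k) atTop (𝓝 0)) :
    (𝔟 0 : ℂ) * discrWronskian x y 0 = (mu - lam) * ∑' k, x (k + 1) * y (k + 1) := by
  have hlim : Tendsto (fun n => (𝔟 n : ℂ) * discrWronskian x y n) atTop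
      (𝓝 (𝔟 0 * discrWronskian x y 0 + (lam - mu) * ∑' k, x (k + 1) * y (k + 1))) := by
    refine (tendsto_const_nhds.add (tendsto_const_nhds.mul hs.hasSum.tendsto_sum_nat)).congr
      fun n => ?_
    exact (mul_discrWronskian_eq_add_sum hx hy n).symm
  linear_combination tendsto_nhds_unique hlim hW

end IsJacobiSolution

theorem tendsto_mul_discrWronskian_zero {𝔟 : ℕ → ℝ} {b : ℝ} {x y : ℕ → ℂ}
    (h𝔟 : Tendsto 𝔟 atTop (𝓝 b)) (hx : Tendsto x atTop (𝓝 0)) (hy : Tendsto y atTop (𝓝 0)) :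
    Tendsto (fun k => (𝔟 k : ℂ) * discrWronskian x y k) atTop (𝓝 0) := by
  have hx' := hx.comp (tendsto_add_atTop_nat 1)
  have hy' := hy.comp (tendsto_add_atTop_nat 1)
  simpa [discrWronskian] using
    ((continuous_ofReal.tendsto b).comp h𝔟).mul ((hx.mul hy').sub (hx'.mul hy))

theorem isBigO_pow_of_tendsto_mul_inv_pow {x : ℕ → ℂ} {θ c : ℂ} (hθ : θ ≠ 0)
    (hjost : Tendsto (fun k => x k * θ⁻¹ ^ k) atTop (𝓝 c)) :
    x =O[atTop] (θ ^ ·) := by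
  have h := (hjost.isBigO_one ℂ).mul (isBigO_refl (θ ^ ·) atTop)
  simp only [one_mul, mul_assoc, ← mul_pow, inv_mul_cancel₀ hθ, one_pow, mul_one] at h
  exact h

theorem summable_sq_norm_of_isBigO_pow {x : ℕ → ℂ} {θ : ℂ} (hθ : ‖θ‖ < 1)
    (hO : x =O[atTop] (θ ^ ·)) : Summable fun k => ‖x k‖ ^ 2 := by
  have hgeo : Summable fun k : ℕ => (‖θ‖ ^ 2) ^ k :=
    summable_geometric_of_lt_one (by positivity) (by nlinarith [norm_nonneg θ])
  refine summable_of_isBigO_nat hgeo ?_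
  have h := (hO.norm_left.norm_right).pow 2
  simp only [norm_pow] at h
  simpa only [← pow_mul, mul_comm] using h

theorem conj_sub_self_of_joukowski (a b : ℝ) {θ : ℂ} (hθ : θ ≠ 0) :
    starRingEnd ℂ (a - b * (θ + θ⁻¹)) - (a - b * (θ + θ⁻¹))
      = b * (starRingEnd ℂ θ - θ) * (((‖θ‖ : ℂ) ^ 2)⁻¹ - 1) := by
  have hθ' : starRingEnd ℂ θ ≠ 0 := by simpa using hθ
  simp only [map_sub, map_mul, map_add, map_inv₀, conj_ofReal]
  rw [← mul_conj']
  field_simp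
  ring

theorem jost_wronskian_boundary_inside_general (a b : ℝ) (θ : ℂ)
    (hθ0 : 0 < ‖θ‖) (hθ1 : ‖θ‖ < 1)
    (𝔞 𝔟 : ℕ → ℝ)
    (h𝔟lim : Tendsto 𝔟 atTop (nhds b))
    (x : ℕ → ℂ) (hx : IsJacobiSolution 𝔞 𝔟 (a - b * (θ + θ⁻¹)) x)
    (hjost : Tendsto (fun k : ℕ => x k * θ⁻¹ ^ k) atTop (nhds 1)) :
    Summable (fun k : ℕ => (‖x (k + 1)‖) ^ 2) ∧
    (𝔟 0 : ℂ) * discrWronskian x (fun k => (starRingEnd ℂ) (x k)) 0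
      = (b : ℂ) * ((starRingEnd ℂ) θ - θ) * (((‖θ‖ : ℂ) ^ 2)⁻¹ - 1)
        * ∑' k : ℕ, ((‖x (k + 1)‖ : ℂ)) ^ 2 := by
  have hθ : θ ≠ 0 := norm_pos_iff.mp hθ0
  have hO := isBigO_pow_of_tendsto_mul_inv_pow hθ hjost
  have hsum : Summable fun k => ‖x (k + 1)‖ ^ 2 :=
    (summable_nat_add_iff 1).mpr (summable_sq_norm_of_isBigO_pow hθ1 hO)
  have hx0 : Tendsto x atTop (𝓝 0) :=
    hO.trans_tendsto (tendsto_pow_atTop_nhds_zero_of_norm_lt_one hθ1)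
  have hxbar0 : Tendsto (fun k => starRingEnd ℂ (x k)) atTop (𝓝 0) := by
    simpa using hx0.star
  have hsumC : Summable fun k => x (k + 1) * starRingEnd ℂ (x (k + 1)) := by
    simpa only [mul_conj', ofReal_pow] using (summable_ofReal.mpr hsum)
  refine ⟨hsum, ?_⟩
  rw [hx.mul_discrWronskian_zero_eq_tsum hx.conj hsumC
      (tendsto_mul_discrWronskian_zero h𝔟lim hx0 hxbar0),
    conj_sub_self_of_joukowski a b hθ]
  simp only [mul_conj']

theorem jost_wronskian_boundary_inside (a b : ℝ) (hb : 0 < b) (θ : ℂ)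
    (hθ0 : 0 < ‖θ‖) (hθ1 : ‖θ‖ < 1)
    (𝔞 𝔟 : ℕ → ℝ) (h𝔟 : ∀ k, 0 < 𝔟 k)
    (h𝔟lim : Tendsto 𝔟 atTop (nhds b))
    (x : ℕ → ℂ) (hx : IsJacobiSolution 𝔞 𝔟 (a - b * (θ + θ⁻¹)) x)
    (hjost : Tendsto (fun k : ℕ => x k * θ⁻¹ ^ k) atTop (nhds 1)) :
    Summable (fun k : ℕ => (‖x (k + 1)‖) ^ 2) ∧
    (𝔟 0 : ℂ) * discrWronskian x (fun k => (starRingEnd ℂ) (x k)) 0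
      = (b : ℂ) * ((starRingEnd ℂ) θ - θ) * (((‖θ‖ : ℂ) ^ 2)⁻¹ - 1)
        * ∑' k : ℕ, ((‖x (k + 1)‖ : ℂ)) ^ 2 :=
  jost_wronskian_boundary_inside_general a b θ hθ0 hθ1 𝔞 𝔟 h𝔟lim x hx hjost
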